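/- arXiv:0804.4246 — 9 statements merged into one kernel-verified Lean document; each statement's English description precedes it below -/
import Mathlib

section
/- Let R be a ℤ-graded ring and let T = ⊕_{n∈ℤ} T^n be a ℤ-graded R-module. If T has bounded finitely generated submodules and if for every integer m there exists an integer n < m with T^n ≠ 0 (i.e., T^n ≠ 0 for arbitrarily negative n), then T is not finitely generated as an R-module. -/
open DirectSum

/-- A ℤ-graded module `T` (with grading `ℳ`) over a ℤ-graded ring `R` (with grading `𝒜`)
has *bounded finitely generated submodules* if for every integer `m` there is an integer `N`
such that the `R`-submodule of `T` generated by `⊕_{n > m} T^n` is contained in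
`⊕_{n > N} T^n`, i.e. every element of that submodule has all of its homogeneous components
in degrees `> N`. -/
def HasBoundedFGSubmodules {R T : Type*} [Ring R] [AddCommGroup T] [Module R T]
    (ℳ : ℤ → AddSubgroup T) [DirectSum.Decomposition ℳ] : Prop :=
  ∀ m : ℤ, ∃ N : ℤ,
    ∀ x ∈ Submodule.span R (⋃ n > m, (ℳ n : Set T)),
      ∀ n : ℤ, n ≤ N → (DirectSum.decompose ℳ x n : T) = 0

/-! Every element of `T` lies in `span (⊕_{n > m} T^n)` for `m` small enough, so `T` is the
directed union of these submodules. If `T` were finitely generated, it would be compact in its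
lattice of submodules and hence equal to one of them; bounded finitely generated submodules then
force `T^n = 0` for all `n ≤ N`, contradicting `T^n ≠ 0` for arbitrarily negative `n`. -/

theorem Submodule.exists_eq_top_of_directed {R M ι : Type*} [Semiring R] [AddCommMonoid M]
    [Module R M] [Module.Finite R M] [Nonempty ι] {S : ι → Submodule R M}
    (hdir : Directed (· ≤ ·) S) (hcover : ∀ x, ∃ i, x ∈ S i) : ∃ i, S i = ⊤ := by
  have htop := (fg_iff_compact (⊤ : Submodule R M)).mp Module.Finite.fg_top
  rw [CompleteLattice.isCompactElement_iff_le_of_directed_sSup_le] at htop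
  have hsSup : ⊤ ≤ sSup (Set.range S) := fun x _ ↦
    let ⟨i, hi⟩ := hcover x
    mem_sSup_of_mem (Set.mem_range_self i) hi
  obtain ⟨-, ⟨i, rfl⟩, hi⟩ := htop _ (Set.range_nonempty S) hdir.directedOn_range hsSup
  exact ⟨i, top_le_iff.mp hi⟩

section spanDegreeGT

variable {ι σ T : Type*} (R : Type*) [LinearOrder ι] [Semiring R] [AddCommMonoid T] [Module R T]
  [SetLike σ T] (ℳ : ι → σ)

def spanDegreeGT (m : ι) : Submodule R T :=
  Submodule.span R (⋃ n > m, (ℳ n : Set T))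

theorem spanDegreeGT_antitone : Antitone (spanDegreeGT R ℳ) :=
  fun _ _ hab ↦ Submodule.span_mono <|
    Set.biUnion_mono (fun _ ↦ hab.trans_lt) fun _ _ ↦ subset_rfl

variable [AddSubmonoidClass σ T] [Decomposition ℳ] [NoMinOrder ι] [Nonempty ι]

theorem exists_mem_spanDegreeGT (x : T) : ∃ m, x ∈ spanDegreeGT R ℳ m := by
  classical
  obtain ⟨M, hM⟩ := (DFinsupp.support (decompose ℳ x)).bddBelow
  obtain ⟨m, hm⟩ := exists_lt M
  refine ⟨m, ?_⟩
  rw [← sum_support_decompose ℳ x]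
  exact Submodule.sum_mem _ fun i hi ↦ Submodule.subset_span <|
    Set.mem_biUnion (hm.trans_le (hM hi)) (decompose ℳ x i).2

theorem exists_spanDegreeGT_eq_top [Module.Finite R T] : ∃ m, spanDegreeGT R ℳ m = ⊤ :=
  Submodule.exists_eq_top_of_directed (spanDegreeGT_antitone R ℳ).directed_le
    (exists_mem_spanDegreeGT R ℳ)

end spanDegreeGT

theorem not_finite_of_hasBoundedFGSubmodules_general
    {R T : Type*} [Ring R] [AddCommGroup T] [Module R T]
    (ℳ : ℤ → AddSubgroup T)
    [DirectSum.Decomposition ℳ]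
    (hbfgs : HasBoundedFGSubmodules (R := R) ℳ)
    (hneg : ∀ m : ℤ, ∃ n < m, ℳ n ≠ ⊥) :
    ¬ Module.Finite R T := by
  intro hfin
  obtain ⟨m, hm⟩ := exists_spanDegreeGT_eq_top R ℳ
  obtain ⟨N, hN⟩ := hbfgs m
  obtain ⟨n, hnN, hn⟩ := hneg N
  obtain ⟨⟨y, hy⟩, hy0⟩ := AddSubgroup.ne_bot_iff_exists_ne_zero.mp hn
  have hyn : (decompose ℳ y n : T) = 0 := hN y (hm.ge Submodule.mem_top) n hnN.le
  rw [decompose_of_mem_same ℳ hy] at hyn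
  exact hy0 (Subtype.ext hyn)

/-- If a ℤ-graded module `T` over a ℤ-graded ring `R` has bounded finitely generated
submodules and `T^n ≠ 0` for arbitrarily negative `n`, then `T` is not a finitely
generated `R`-module. -/
theorem not_finite_of_hasBoundedFGSubmodules
    {R T : Type*} [Ring R] [AddCommGroup T] [Module R T]
    (𝒜 : ℤ → AddSubgroup R) (ℳ : ℤ → AddSubgroup T)
    [GradedRing 𝒜] [DirectSum.Decomposition ℳ] [SetLike.GradedSMul 𝒜 ℳ]
    (hbfgs : HasBoundedFGSubmodules (R := R) ℳ)
    (hneg : ∀ m : ℤ, ∃ n < m, ℳ n ≠ ⊥) :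
    ¬ Module.Finite R T :=
  not_finite_of_hasBoundedFGSubmodules_general ℳ hbfgs hneg
end

section
/- Let R = ⊕_{n∈ℤ} R^n and A = ⊕_{n∈ℤ} A^n be ℤ-graded rings and let φ : R → A be a ring homomorphism preserving degrees, i.e., φ(R^n) ⊆ A^n for all n ∈ ℤ. Suppose that A, regarded as a ℤ-graded R-module via φ, has bounded finitely generated submodules. Then every ℤ-graded left A-module T, regarded as a ℤ-graded R-module via φ, has bounded finitely generated submodules. -/
open DirectSum

/-! Since `1 ∈ A⁰`, the element `φ r = r • 1` lies in the `R`-submodule of `A`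
generated by `⊕_{n > -1} A^n`, so all components of every `φ r` sit in degrees `> N₀` for one
fixed `N₀`.  For homogeneous `t ∈ T^j` with `j > m`, the element `r • t = φ r • t` is then a sum
of homogeneous terms of degrees `> N₀ + j`, and this bound passes to sums of such elements. -/

namespace DirectSum

variable {T : Type*} [AddCommGroup T] (𝒯 : ℤ → AddSubgroup T) [Decomposition 𝒯]

/-- `⊕_{n > N} T^n`: the elements all of whose homogeneous components lie in degrees `> N`. -/
def aboveDegree (N : ℤ) : AddSubmonoid T where
  carrier := {x | ∀ n ≤ N, (decompose 𝒯 x n : T) = 0}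
  zero_mem' n _ := by simp
  add_mem' {x y} hx hy n hn := by simp [hx n hn, hy n hn]

variable {𝒯}

theorem aboveDegree_mono {N N' : ℤ} (h : N ≤ N') : aboveDegree 𝒯 N' ≤ aboveDegree 𝒯 N :=
  fun _ hx n hn => hx n (hn.trans h)

theorem mem_aboveDegree_of_mem {N j : ℤ} {x : T} (hx : x ∈ 𝒯 j) (hj : N < j) :
    x ∈ aboveDegree 𝒯 N :=
  fun _ hn => decompose_of_mem_ne 𝒯 hx (by omega)

theorem smul_mem_aboveDegree {A : Type*} [Ring A] [Module A T]
    {ℬ : ℤ → AddSubgroup A} [Decomposition ℬ] [SetLike.GradedSMul ℬ 𝒯]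
    {N j : ℤ} {a : A} {t : T} (ha : a ∈ aboveDegree ℬ N) (ht : t ∈ 𝒯 j) :
    a • t ∈ aboveDegree 𝒯 (N + j) := by
  classical
  rw [← sum_support_decompose ℬ a, Finset.sum_smul]
  refine AddSubmonoid.sum_mem _ fun k _ => ?_
  by_cases hk : k ≤ N
  · simp [ha k hk]
  · exact mem_aboveDegree_of_mem (SetLike.GradedSMul.smul_mem (decompose ℬ a k).2 ht)
      (by rw [vadd_eq_add]; omega)

theorem span_le_aboveDegree {R : Type*} [Ring R] [Module R T] {s : Set T} {N : ℤ}
    (h : ∀ (r : R), ∀ t ∈ s, r • t ∈ aboveDegree 𝒯 N) :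
    (Submodule.span R s).toAddSubmonoid ≤ aboveDegree 𝒯 N := by
  rw [Submodule.span_eq_closure, AddSubmonoid.closure_le, Set.smul_subset_iff]
  exact fun r _ t ht => h r t ht

end DirectSum

theorem HasBoundedFGSubmodules.exists_smul_mem_aboveDegree {R T : Type*} [Ring R]
    [AddCommGroup T] [Module R T] {𝒯 : ℤ → AddSubgroup T} [Decomposition 𝒯]
    (h𝒯 : HasBoundedFGSubmodules (R := R) 𝒯) {j : ℤ} {t : T} (ht : t ∈ 𝒯 j) :
    ∃ N : ℤ, ∀ r : R, r • t ∈ aboveDegree 𝒯 N := by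
  obtain ⟨N, hN⟩ := h𝒯 (j - 1)
  refine ⟨N, fun r => hN _ (Submodule.smul_mem _ r (Submodule.subset_span ?_))⟩
  exact Set.mem_biUnion (show j - 1 < j by omega) ht

theorem hasBoundedFGSubmodules_of_gradedRingHom_general
    {R A T : Type*} [Ring R] [Ring A] [AddCommGroup T]
    (ℬ : ℤ → AddSubgroup A) (𝒯 : ℤ → AddSubgroup T)
    [GradedRing ℬ] [DirectSum.Decomposition 𝒯]
    [Module A T] [SetLike.GradedSMul ℬ 𝒯]
    (φ : R →+* A)
    [Module R A] (hRA : ∀ (r : R) (x : A), r • x = φ r * x)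
    [Module R T] (hRT : ∀ (r : R) (t : T), r • t = φ r • t)
    (hA : HasBoundedFGSubmodules (R := R) ℬ) :
    HasBoundedFGSubmodules (R := R) 𝒯 := by
  intro m
  obtain ⟨N, hN⟩ := hA.exists_smul_mem_aboveDegree (SetLike.one_mem_graded ℬ)
  refine ⟨N + m + 1, fun x hx => span_le_aboveDegree ?_ hx⟩
  intro r t ht
  obtain ⟨j, hj, ht⟩ := Set.mem_iUnion₂.mp ht
  rw [hRT, ← mul_one (φ r), ← hRA]
  exact aboveDegree_mono (by omega) (smul_mem_aboveDegree (hN r) ht)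

/-- Let `φ : R → A` be a degree-preserving ring homomorphism of ℤ-graded rings.  If `A`,
regarded as a ℤ-graded `R`-module via `φ`, has bounded finitely generated submodules, then
every ℤ-graded left `A`-module `T`, regarded as a ℤ-graded `R`-module via `φ`, has bounded
finitely generated submodules. -/
theorem hasBoundedFGSubmodules_of_gradedRingHom
    {R A T : Type*} [Ring R] [Ring A] [AddCommGroup T]
    (𝒜 : ℤ → AddSubgroup R) (ℬ : ℤ → AddSubgroup A) (𝒯 : ℤ → AddSubgroup T)
    [GradedRing 𝒜] [GradedRing ℬ] [DirectSum.Decomposition 𝒯]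
    [Module A T] [SetLike.GradedSMul ℬ 𝒯]
    (φ : R →+* A) (hφ : ∀ n : ℤ, ∀ r ∈ 𝒜 n, φ r ∈ ℬ n)
    [Module R A] (hRA : ∀ (r : R) (x : A), r • x = φ r * x)
    [Module R T] (hRT : ∀ (r : R) (t : T), r • t = φ r • t)
    (hA : HasBoundedFGSubmodules (R := R) ℬ) :
    HasBoundedFGSubmodules (R := R) 𝒯 :=
  hasBoundedFGSubmodules_of_gradedRingHom_general ℬ 𝒯 φ hRA hRT hA
end

section
/- Let R = ⊕_{n∈ℤ} R^n and A = ⊕_{n∈ℤ} A^n be ℤ-graded rings and let φ : R → A be a ring homomorphism with φ(R^n) ⊆ A^n for all n ∈ ℤ. Suppose that A, regarded as a ℤ-graded R-module via φ, has bounded finitely generated submodules. If T is a ℤ-graded left A-module such that for every integer m there exists n < m with T^n ≠ 0, then T, regarded as an R-module via φ, is not finitely generated. -/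
open DirectSum

/-! If `T` were finitely generated over `R`, take finitely many generators; their homogeneous
components live in degrees `> M` for some `M`. Since `r • 1 = φ r` lies in the `R`-span of
`A^0`, the boundedness of `A` puts every `φ r` in degrees `> N`, uniformly in `r`. A graded
action adds degrees, so every `r • s = φ r • s`, and hence all of `T`, lives in degrees
`> N + M + 1`, which contradicts `T^n ≠ 0` for arbitrarily negative `n`. -/

section SupportedAbove

variable {T : Type*} [AddCommGroup T]

def supportedAbove (𝒯 : ℤ → AddSubgroup T) [Decomposition 𝒯] (N : ℤ) : AddSubgroup T where
  carrier := {t | ∀ n ≤ N, (decompose 𝒯 t n : T) = 0}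
  add_mem' {a b} ha hb n hn := by simp [ha n hn, hb n hn]
  zero_mem' n _ := by simp
  neg_mem' {a} ha n hn := by
    rw [decompose_neg, DFinsupp.neg_apply, AddSubgroup.coe_neg, ha n hn, neg_zero]

variable (𝒯 : ℤ → AddSubgroup T) [Decomposition 𝒯]

theorem mem_supportedAbove_of_mem {t : T} {i N : ℤ} (ht : t ∈ 𝒯 i) (hi : N < i) :
    t ∈ supportedAbove 𝒯 N :=
  fun n hn => decompose_of_mem_ne 𝒯 ht (by omega)

theorem eq_zero_of_mem_of_mem_supportedAbove {t : T} {n N : ℤ} (ht : t ∈ 𝒯 n) (hn : n ≤ N)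
    (h : t ∈ supportedAbove 𝒯 N) : t = 0 := by
  rw [← decompose_of_mem_same 𝒯 ht]
  exact h n hn

theorem lt_of_mem_support_of_mem_supportedAbove [∀ (i : ℤ) (x : 𝒯 i), Decidable (x ≠ 0)]
    {t : T} {N i : ℤ} (h : t ∈ supportedAbove 𝒯 N) (hi : i ∈ (decompose 𝒯 t).support) :
    N < i := by
  by_contra! hle
  exact DFinsupp.mem_support_iff.mp hi (Subtype.ext (h i hle))

theorem exists_forall_mem_supportedAbove (S : Finset T) :
    ∃ N, ∀ t ∈ S, t ∈ supportedAbove 𝒯 N := by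
  classical
  obtain ⟨b, hb⟩ := (S.biUnion fun t => (decompose 𝒯 t).support).bddBelow
  refine ⟨b - 1, fun t ht n hn => by_contra fun hne => ?_⟩
  have : n ∈ S.biUnion fun t => (decompose 𝒯 t).support :=
    Finset.mem_biUnion.mpr ⟨t, ht, DFinsupp.mem_support_iff.mpr fun h0 => hne (by simp [h0])⟩
  have := hb this
  omega

theorem smul_mem_supportedAbove {A : Type*} [Ring A] (ℬ : ℤ → AddSubgroup A)
    [Decomposition ℬ] [Module A T] [SetLike.GradedSMul ℬ 𝒯] {a : A} {t : T} {N M : ℤ}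
    (ha : a ∈ supportedAbove ℬ N) (ht : t ∈ supportedAbove 𝒯 M) :
    a • t ∈ supportedAbove 𝒯 (N + M + 1) := by
  classical
  rw [← sum_support_decompose ℬ a, ← sum_support_decompose 𝒯 t, Finset.sum_smul]
  refine AddSubgroup.sum_mem _ fun i hi => ?_
  rw [Finset.smul_sum]
  refine AddSubgroup.sum_mem _ fun j hj => mem_supportedAbove_of_mem 𝒯
    (SetLike.GradedSMul.smul_mem (decompose ℬ a i).2 (decompose 𝒯 t j).2) ?_
  have := lt_of_mem_support_of_mem_supportedAbove ℬ ha hi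
  have := lt_of_mem_support_of_mem_supportedAbove 𝒯 ht hj
  rw [vadd_eq_add]
  omega

end SupportedAbove

theorem HasBoundedFGSubmodules.exists_forall_smul_one_mem_supportedAbove {R A : Type*} [Ring R]
    [Ring A] [Module R A] {ℬ : ℤ → AddSubgroup A} [GradedRing ℬ]
    (hA : HasBoundedFGSubmodules (R := R) ℬ) :
    ∃ N, ∀ r : R, r • (1 : A) ∈ supportedAbove ℬ N := by
  obtain ⟨N, hN⟩ := hA (-1)
  refine ⟨N, fun r => hN _ (Submodule.smul_mem _ r (Submodule.subset_span ?_))⟩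
  exact Set.mem_iUnion₂.mpr ⟨0, by norm_num, SetLike.one_mem_graded ℬ⟩

theorem exists_forall_mem_supportedAbove_of_finite {R A T : Type*} [Ring R] [Ring A]
    [AddCommGroup T] (ℬ : ℤ → AddSubgroup A) (𝒯 : ℤ → AddSubgroup T) [Decomposition ℬ]
    [Decomposition 𝒯] [Module A T] [SetLike.GradedSMul ℬ 𝒯] [Module R A] [Module R T]
    [IsScalarTower R A T] [Module.Finite R T] {N : ℤ}
    (hN : ∀ r : R, r • (1 : A) ∈ supportedAbove ℬ N) :
    ∃ K, ∀ t : T, t ∈ supportedAbove 𝒯 K := by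
  obtain ⟨S, hS⟩ := Module.Finite.fg_top (R := R) (M := T)
  obtain ⟨M, hM⟩ := exists_forall_mem_supportedAbove 𝒯 S
  refine ⟨N + M + 1, fun t => ?_⟩
  have ht : t ∈ Submodule.span R (S : Set T) := hS ▸ Submodule.mem_top
  obtain ⟨c, -, rfl⟩ := Submodule.mem_span_finset.mp ht
  refine AddSubgroup.sum_mem _ fun s hs => ?_
  rw [← smul_one_smul A]
  exact smul_mem_supportedAbove 𝒯 ℬ (hN (c s)) (hM s hs)

theorem not_finite_over_base_of_gradedRingHom_general
    {R A T : Type*} [Ring R] [Ring A] [AddCommGroup T]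
    (ℬ : ℤ → AddSubgroup A) (𝒯 : ℤ → AddSubgroup T)
    [GradedRing ℬ] [DirectSum.Decomposition 𝒯]
    [Module A T] [SetLike.GradedSMul ℬ 𝒯]
    (φ : R →+* A)
    [Module R A] (hRA : ∀ (r : R) (x : A), r • x = φ r * x)
    [Module R T] (hRT : ∀ (r : R) (t : T), r • t = φ r • t)
    (hA : HasBoundedFGSubmodules (R := R) ℬ)
    (hneg : ∀ m : ℤ, ∃ n < m, 𝒯 n ≠ ⊥) :
    ¬ Module.Finite R T := by
  intro hfin
  have : IsScalarTower R A T := ⟨fun r a t => by rw [hRA, hRT, mul_smul]⟩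
  obtain ⟨N, hN⟩ := hA.exists_forall_smul_one_mem_supportedAbove
  obtain ⟨K, hK⟩ := exists_forall_mem_supportedAbove_of_finite ℬ 𝒯 hN
  obtain ⟨n, hn, hne⟩ := hneg (K + 1)
  obtain ⟨t, ht0⟩ := (AddSubgroup.ne_bot_iff_exists_ne_zero).mp hne
  exact ht0 (Subtype.ext (eq_zero_of_mem_of_mem_supportedAbove 𝒯 t.2 (by omega) (hK t)))

/-- Let `φ : R → A` be a degree-preserving ring homomorphism of ℤ-graded rings such that `A`,
regarded as a ℤ-graded `R`-module via `φ`, has bounded finitely generated submodules.  If `T`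
is a ℤ-graded left `A`-module with `T^n ≠ 0` for arbitrarily negative `n`, then `T`, regarded
as an `R`-module via `φ`, is not finitely generated. -/
theorem not_finite_over_base_of_gradedRingHom
    {R A T : Type*} [Ring R] [Ring A] [AddCommGroup T]
    (𝒜 : ℤ → AddSubgroup R) (ℬ : ℤ → AddSubgroup A) (𝒯 : ℤ → AddSubgroup T)
    [GradedRing 𝒜] [GradedRing ℬ] [DirectSum.Decomposition 𝒯]
    [Module A T] [SetLike.GradedSMul ℬ 𝒯]
    (φ : R →+* A) (hφ : ∀ n : ℤ, ∀ r ∈ 𝒜 n, φ r ∈ ℬ n)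
    [Module R A] (hRA : ∀ (r : R) (x : A), r • x = φ r * x)
    [Module R T] (hRT : ∀ (r : R) (t : T), r • t = φ r • t)
    (hA : HasBoundedFGSubmodules (R := R) ℬ)
    (hneg : ∀ m : ℤ, ∃ n < m, 𝒯 n ≠ ⊥) :
    ¬ Module.Finite R T :=
  not_finite_over_base_of_gradedRingHom_general ℬ 𝒯 φ hRA hRT hA hneg
end

section
/- Let k be a field and let R = ⊕_{n∈ℤ} R^n be a ℤ-graded associative unital k-algebra with each homogeneous component R^n finite-dimensional over k. Suppose there is a k-linear map λ : R^{-1} → k such that for every integer t the bilinear pairing R^{-t-1} × R^t → k, (a,b) ↦ λ(ab), is nondegenerate in both variables. Let d > 0 and let ζ ∈ R^d be such that for every n ≥ 0 the left-multiplication map R^n → R^{n+d}, r ↦ ζr, is injective. Then for every m < 0 the right-multiplication map R^{m-d} → R^m, r ↦ rζ, is surjective. -/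
/-!
As `R^m` is finite-dimensional and `(a, b) ↦ λ(ab)` is nondegenerate on `R^m`, every linear form
on `R^m` is `λ(- b)` for some `b ∈ R^{-m-1}`; so the image of right multiplication by `ζ` is all
of `R^m` as soon as no nonzero `b` annihilates it. Such a `b` satisfies `λ(r ζ b) = 0` for all
`r ∈ R^{m-d}`, so `ζ b = 0` by duality in degree `d - m - 1`, and then `b = 0` because `ζ` is
regular in the nonnegative degree `-m-1`.
-/

lemma mul_mem_neg_one {k R : Type*} [CommSemiring k] [Semiring R] [Algebra k R]
    (𝒜 : ℤ → Submodule k R) [SetLike.GradedMonoid 𝒜] {t : ℤ} {a b : R}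
    (ha : a ∈ 𝒜 (-t - 1)) (hb : b ∈ 𝒜 t) : a * b ∈ 𝒜 (-1) := by
  have h := SetLike.mul_mem_graded ha hb
  rwa [show -t - 1 + t = -1 by ring] at h

open Function

theorem LinearMap.surjective_of_forall_pairing_eq_zero {K L M N : Type*} [Field K]
    [AddCommGroup L] [Module K L] [AddCommGroup M] [Module K M] [AddCommGroup N] [Module K N]
    {p : M →ₗ[K] N →ₗ[K] K} (hp : Surjective p.flip) {T : L →ₗ[K] M}
    (h : ∀ y, (∀ x, p (T x) y = 0) → y = 0) : Surjective T := by
  rw [← dualMap_injective_iff, injective_iff_map_eq_zero]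
  intro f hf
  obtain ⟨y, rfl⟩ := hp f
  rw [h y fun x => LinearMap.congr_fun hf x, map_zero]

section Graded

variable {k R : Type*} [CommSemiring k] [Semiring R] [Algebra k R] (𝒜 : ℤ → Submodule k R)
  [SetLike.GradedMonoid 𝒜]

noncomputable def gradedPairing (lam : 𝒜 (-1 : ℤ) →ₗ[k] k) (t : ℤ) :
    𝒜 (-t - 1) →ₗ[k] 𝒜 t →ₗ[k] k :=
  LinearMap.mk₂ k (fun a b => lam ⟨a * b, mul_mem_neg_one 𝒜 a.2 b.2⟩)
    (fun a a' b => by rw [← map_add]; exact congrArg lam (Subtype.ext (add_mul ..)))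
    (fun c a b => by rw [← map_smul]; exact congrArg lam (Subtype.ext (smul_mul_assoc ..)))
    (fun a b b' => by rw [← map_add]; exact congrArg lam (Subtype.ext (mul_add ..)))
    (fun c a b => by rw [← map_smul]; exact congrArg lam (Subtype.ext (mul_smul_comm ..)))

def gradedMulRight {ζ : R} {d : ℤ} (hζ : ζ ∈ 𝒜 d) (i : ℤ) : 𝒜 (i - d) →ₗ[k] 𝒜 i :=
  (LinearMap.mulRight k ζ).restrict fun r hr => by
    simpa using SetLike.mul_mem_graded hr hζ

theorem mul_eq_zero_of_forall_gradedPairing_gradedMulRight_eq_zero {lam : 𝒜 (-1 : ℤ) →ₗ[k] k}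
    (hndr : ∀ (t : ℤ) (b : R) (hb : b ∈ 𝒜 t),
      (∀ (a : R) (ha : a ∈ 𝒜 (-t - 1)), lam ⟨a * b, mul_mem_neg_one 𝒜 ha hb⟩ = 0) → b = 0)
    {ζ : R} {d t : ℤ} (hζ : ζ ∈ 𝒜 d) (b : 𝒜 t)
    (h : ∀ r, gradedPairing 𝒜 lam t (gradedMulRight 𝒜 hζ (-t - 1) r) b = 0) : ζ * b = 0 := by
  refine hndr (d + t) _ (SetLike.mul_mem_graded hζ b.2) fun a ha => ?_
  have ha' : a ∈ 𝒜 (-t - 1 - d) := by convert ha using 2; ring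
  exact (congrArg lam (Subtype.ext (mul_assoc a ζ b).symm)).trans (h ⟨a, ha'⟩)

end Graded

theorem surjective_right_mul_of_injective_left_mul_general
    {k R : Type*} [Field k] [Ring R] [Algebra k R]
    (𝒜 : ℤ → Submodule k R) [GradedAlgebra 𝒜]
    (hfin : ∀ n : ℤ, FiniteDimensional k (𝒜 n))
    (lam : 𝒜 (-1 : ℤ) →ₗ[k] k)
    (hndl : ∀ (t : ℤ) (a : R) (ha : a ∈ 𝒜 (-t - 1)),
      (∀ (b : R) (hb : b ∈ 𝒜 t), lam ⟨a * b, mul_mem_neg_one 𝒜 ha hb⟩ = 0) → a = 0)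
    (hndr : ∀ (t : ℤ) (b : R) (hb : b ∈ 𝒜 t),
      (∀ (a : R) (ha : a ∈ 𝒜 (-t - 1)), lam ⟨a * b, mul_mem_neg_one 𝒜 ha hb⟩ = 0) → b = 0)
    (d : ℤ) (ζ : R) (hζ : ζ ∈ 𝒜 d)
    (hreg : ∀ n : ℤ, 0 ≤ n → ∀ r ∈ 𝒜 n, ∀ s ∈ 𝒜 n, ζ * r = ζ * s → r = s) :
    ∀ m : ℤ, m < 0 → ∀ y ∈ 𝒜 m, ∃ r ∈ 𝒜 (m - d), r * ζ = y := by
  intro m hm y hy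
  obtain ⟨t, rfl⟩ : ∃ t, m = -t - 1 := ⟨-m - 1, by ring⟩
  have : FiniteDimensional k (𝒜 (-t - 1)) := hfin _
  have hP : Injective (gradedPairing 𝒜 lam t) := by
    rw [injective_iff_map_eq_zero]
    intro a ha
    exact Subtype.ext (hndl t a a.2 fun b hb => LinearMap.congr_fun ha ⟨b, hb⟩)
  have hann : ∀ b : 𝒜 t, (∀ r, gradedPairing 𝒜 lam t (gradedMulRight 𝒜 hζ _ r) b = 0) → b = 0 :=
    fun b h => Subtype.ext <| hreg t (by omega) b b.2 0 (zero_mem _) <| by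
      rw [mul_zero, mul_eq_zero_of_forall_gradedPairing_gradedMulRight_eq_zero 𝒜 hndr hζ b h]
  obtain ⟨r, hr⟩ := LinearMap.surjective_of_forall_pairing_eq_zero
    (LinearMap.flip_surjective_iff₁.2 hP) hann ⟨y, hy⟩
  exact ⟨r, r.2, congrArg Subtype.val hr⟩

/-- Let `R` be a ℤ-graded `k`-algebra with finite-dimensional homogeneous components, and
suppose `λ : R^{-1} → k` is a `k`-linear map such that all pairings
`R^{-t-1} × R^t → k`, `(a, b) ↦ λ(ab)`, are nondegenerate in both variables
(an abstraction of Tate duality).  If `ζ ∈ R^d` with `d > 0` is such that left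
multiplication by `ζ` is injective on `R^n` for all `n ≥ 0`, then right multiplication by
`ζ` maps `R^{m-d}` onto `R^m` for every `m < 0`. -/
theorem surjective_right_mul_of_injective_left_mul
    {k R : Type*} [Field k] [Ring R] [Algebra k R]
    (𝒜 : ℤ → Submodule k R) [GradedAlgebra 𝒜]
    (hfin : ∀ n : ℤ, FiniteDimensional k (𝒜 n))
    (lam : 𝒜 (-1 : ℤ) →ₗ[k] k)
    (hndl : ∀ (t : ℤ) (a : R) (ha : a ∈ 𝒜 (-t - 1)),
      (∀ (b : R) (hb : b ∈ 𝒜 t), lam ⟨a * b, mul_mem_neg_one 𝒜 ha hb⟩ = 0) → a = 0)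
    (hndr : ∀ (t : ℤ) (b : R) (hb : b ∈ 𝒜 t),
      (∀ (a : R) (ha : a ∈ 𝒜 (-t - 1)), lam ⟨a * b, mul_mem_neg_one 𝒜 ha hb⟩ = 0) → b = 0)
    (d : ℤ) (hd : 0 < d) (ζ : R) (hζ : ζ ∈ 𝒜 d)
    (hreg : ∀ n : ℤ, 0 ≤ n → ∀ r ∈ 𝒜 n, ∀ s ∈ 𝒜 n, ζ * r = ζ * s → r = s) :
    ∀ m : ℤ, m < 0 → ∀ y ∈ 𝒜 m, ∃ r ∈ 𝒜 (m - d), r * ζ = y :=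
  surjective_right_mul_of_injective_left_mul_general 𝒜 hfin lam hndl hndr d ζ hζ hreg
end

section
/- Let R = ⊕_{n∈ℤ} R^n be a ℤ-graded ring in which the product of any two homogeneous elements of negative degree is zero (R^a · R^b = 0 whenever a < 0 and b < 0). Let K be a graded left ideal of R, i.e., an R-submodule of R with K = ⊕_{n∈ℤ} K^n where K^n = K ∩ R^n. Suppose K^n = 0 for all n ≥ 0, and suppose that for every integer m there exists n < m with K^n ≠ 0. Then K is not finitely generated as an R-module. -/
/-!
The degree-`n` component of `r * s`, for `s` homogeneous of negative degree `d > n`, is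
`r_{n-d} * s` with `n - d < 0`, hence vanishes. The generators of a finitely generated `K` have
components only in negative degrees (as `K` is graded and vanishes in degrees `≥ 0`) bounded
below by some `m`, so every element of `K` has zero component in each degree `n < m`,
contradicting `K^n ≠ 0`.
-/

open DirectSum

theorem DirectSum.exists_le_of_decompose_ne_zero {ι M σ : Type*} [DecidableEq ι] [LinearOrder ι]
    [Nonempty ι] [AddCommMonoid M] [SetLike σ M] [AddSubmonoidClass σ M] (ℳ : ι → σ)
    [Decomposition ℳ] (S : Finset M) :
    ∃ m : ι, ∀ s ∈ S, ∀ d, (decompose ℳ s d : M) ≠ 0 → m ≤ d := by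
  classical
  obtain ⟨m, hm⟩ := (S.biUnion fun s => (decompose ℳ s).support).bddBelow
  refine ⟨m, fun s hs d hd => hm ?_⟩
  exact Finset.mem_biUnion.2 ⟨s, hs, DFinsupp.mem_support_iff.2 fun h => hd (by simp [h])⟩

section NegativeProducts

variable {R : Type*} [Ring R] (𝒜 : ℤ → AddSubgroup R) [GradedRing 𝒜]

theorem coe_decompose_mul_eq_zero_of_mem_neg
    (hnegmul : ∀ a b : ℤ, a < 0 → b < 0 → ∀ x ∈ 𝒜 a, ∀ y ∈ 𝒜 b, x * y = 0)
    {d n : ℤ} (hd : d < 0) (hnd : n < d) (r : R)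
    {s : R} (hs : s ∈ 𝒜 d) : (decompose 𝒜 (r * s) n : R) = 0 := by
  have h := coe_decompose_mul_add_of_right_mem 𝒜 (i := n - d) (a := r) hs
  rw [sub_add_cancel] at h
  rw [h]
  exact hnegmul _ _ (by omega) hd _ (decompose 𝒜 r (n - d)).2 _ hs

theorem coe_decompose_mul_eq_zero
    (hnegmul : ∀ a b : ℤ, a < 0 → b < 0 → ∀ x ∈ 𝒜 a, ∀ y ∈ 𝒜 b, x * y = 0)
    {n : ℤ} {s : R}
    (hs : ∀ d, (decompose 𝒜 s d : R) ≠ 0 → n < d ∧ d < 0) (r : R) :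
    (decompose 𝒜 (r * s) n : R) = 0 := by
  classical
  rw [← sum_support_decompose 𝒜 s, Finset.mul_sum, decompose_sum, DFinsupp.finsetSum_apply,
    AddSubmonoidClass.coe_finsetSum]
  refine Finset.sum_eq_zero fun d _ => ?_
  by_cases hsd : (decompose 𝒜 s d : R) = 0
  · simp [hsd]
  · obtain ⟨hnd, hd⟩ := hs d hsd
    exact coe_decompose_mul_eq_zero_of_mem_neg 𝒜 hnegmul hd hnd r (decompose 𝒜 s d).2

theorem coe_decompose_eq_zero_of_mem_span
    (hnegmul : ∀ a b : ℤ, a < 0 → b < 0 → ∀ x ∈ 𝒜 a, ∀ y ∈ 𝒜 b, x * y = 0)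
    {n : ℤ} {S : Finset R}
    (hS : ∀ s ∈ S, ∀ d, (decompose 𝒜 s d : R) ≠ 0 → n < d ∧ d < 0) {x : R}
    (hx : x ∈ Submodule.span R (S : Set R)) : (decompose 𝒜 x n : R) = 0 := by
  obtain ⟨f, -, rfl⟩ := Submodule.mem_span_finset.1 hx
  rw [decompose_sum, DFinsupp.finsetSum_apply, AddSubmonoidClass.coe_finsetSum]
  exact Finset.sum_eq_zero fun s hs => coe_decompose_mul_eq_zero 𝒜 hnegmul (hS s hs) (f s)

end NegativeProducts

theorem degree_neg_of_coe_decompose_ne_zero {R : Type*} [Ring R] (𝒜 : ℤ → AddSubgroup R)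
    [GradedRing 𝒜] {K : Submodule R R}
    (hgraded : ∀ x ∈ K, ∀ n : ℤ, (decompose 𝒜 x n : R) ∈ K)
    (hnonneg : ∀ n : ℤ, 0 ≤ n → ∀ x ∈ K, x ∈ 𝒜 n → x = 0)
    {x : R} (hx : x ∈ K) {d : ℤ} (hxd : (decompose 𝒜 x d : R) ≠ 0) : d < 0 :=
  not_le.1 fun hd => hxd (hnonneg d hd _ (hgraded x hx d) (decompose 𝒜 x d).2)

/-- Let `R` be a ℤ-graded ring in which the product of any two homogeneous elements of
negative degree is zero, and let `K` be a graded left ideal of `R` with `K^n = 0` for all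
`n ≥ 0` but `K^n ≠ 0` for arbitrarily negative `n`.  Then `K` is not finitely generated
as an `R`-module. -/
theorem not_fg_of_negatively_graded_ideal
    {R : Type*} [Ring R] (𝒜 : ℤ → AddSubgroup R) [GradedRing 𝒜]
    (hnegmul : ∀ a b : ℤ, a < 0 → b < 0 → ∀ x ∈ 𝒜 a, ∀ y ∈ 𝒜 b, x * y = 0)
    (K : Submodule R R)
    (hgraded : ∀ x ∈ K, ∀ n : ℤ, (DirectSum.decompose 𝒜 x n : R) ∈ K)
    (hnonneg : ∀ n : ℤ, 0 ≤ n → ∀ x ∈ K, x ∈ 𝒜 n → x = 0)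
    (hneg : ∀ m : ℤ, ∃ n < m, ∃ x ∈ K, x ∈ 𝒜 n ∧ x ≠ 0) :
    ¬ K.FG := by
  rintro ⟨S, rfl⟩
  obtain ⟨m, hm⟩ := exists_le_of_decompose_ne_zero 𝒜 S
  obtain ⟨n, hnm, x, hx, hxn, hx0⟩ := hneg m
  have hS : ∀ s ∈ S, ∀ d, (decompose 𝒜 s d : R) ≠ 0 → n < d ∧ d < 0 := fun s hs d hd =>
    ⟨hnm.trans_le (hm s hs d hd),
      degree_neg_of_coe_decompose_ne_zero 𝒜 hgraded hnonneg (Submodule.subset_span hs) hd⟩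
  apply hx0
  rw [← decompose_of_mem_same 𝒜 hxn]
  exact coe_decompose_eq_zero_of_mem_span 𝒜 hnegmul hS hx
end

section
/- Let R = ⊕_{n∈ℤ} R^n be a ℤ-graded ring and let K be a graded left ideal of R (an R-submodule of R with K = ⊕_{n∈ℤ} K^n, K^n = K ∩ R^n). Suppose: (i) the non-negative part ⊕_{n≥0} K^n is finitely generated as a module over the subring R^{≥0} = ⊕_{n≥0} R^n; and (ii) there exist an integer n₀ ≥ 0 and an element γ ∈ K^{n₀} such that for every m < 0 one has {rγ : r ∈ R^{m-n₀}} = R^m. Then K is finitely generated as an R-module. -/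
open DirectSum

/-!
Split `x ∈ K` into its homogeneous components, each of which lies in `K`. A component of
negative degree is a multiple of `γ`; a component of non-negative degree is covered by the
finite generating set `S` of the non-negative part. Hence `K` is spanned by `insert γ S`.
-/

theorem DirectSum.mem_of_forall_decompose_mem {ι M σ P : Type*} [DecidableEq ι]
    [AddCommMonoid M] [SetLike σ M] [AddSubmonoidClass σ M] (ℳ : ι → σ) [Decomposition ℳ]
    [SetLike P M] [AddSubmonoidClass P M] {p : P} {x : M}
    (hx : ∀ i, (decompose ℳ x i : M) ∈ p) : x ∈ p := by
  classical
  rw [← sum_support_decompose ℳ x]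
  exact sum_mem fun i _ => hx i

theorem AddSubgroup.closure_mul_le_span {R : Type*} [Ring R] (P : R → Prop) (S : Set R) :
    closure {y : R | ∃ r g : R, P r ∧ g ∈ S ∧ y = r * g} ≤
      (Submodule.span R S).toAddSubgroup :=
  (closure_le _).mpr fun _ ⟨r, _, _, hg, hy⟩ =>
    hy ▸ Submodule.smul_mem _ r (Submodule.subset_span hg)

/-- Let `R` be a ℤ-graded ring and `K` a graded left ideal of `R`.  Suppose that
(i) the non-negative part `⊕_{n ≥ 0} K^n` of `K` is finitely generated as a module over the
subring `R^{≥ 0} = ⊕_{n ≥ 0} R^n` (expressed below: there is a finite set `S` of elements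
of `K` supported in non-negative degrees such that every element of `K` supported in
non-negative degrees lies in the additive subgroup generated by the products `r * g` with
`r ∈ R^{≥0}` and `g ∈ S`), and
(ii) there are `n₀ ≥ 0` and `γ ∈ K ∩ R^{n₀}` such that for every `m < 0` right
multiplication by `γ` maps `R^{m - n₀}` onto `R^m`.
Then `K` is finitely generated as an `R`-module. -/
theorem fg_of_nonneg_fg_and_surjective_mul
    {R : Type*} [Ring R] (𝒜 : ℤ → AddSubgroup R) [GradedRing 𝒜]
    (K : Submodule R R)
    (hgraded : ∀ x ∈ K, ∀ n : ℤ, (DirectSum.decompose 𝒜 x n : R) ∈ K)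
    (hfg : ∃ S : Finset R,
      (∀ g ∈ S, g ∈ K ∧ ∀ n : ℤ, n < 0 → (DirectSum.decompose 𝒜 g n : R) = 0) ∧
      (∀ x ∈ K, (∀ n : ℤ, n < 0 → (DirectSum.decompose 𝒜 x n : R) = 0) →
        x ∈ AddSubgroup.closure
          {y : R | ∃ r g : R, (∀ n : ℤ, n < 0 → (DirectSum.decompose 𝒜 r n : R) = 0) ∧
            g ∈ S ∧ y = r * g}))
    (hγ : ∃ n₀ : ℤ, 0 ≤ n₀ ∧ ∃ γ ∈ K, γ ∈ 𝒜 n₀ ∧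
      ∀ m : ℤ, m < 0 → ∀ y ∈ 𝒜 m, ∃ r ∈ 𝒜 (m - n₀), r * γ = y) :
    K.FG := by
  classical
  obtain ⟨S, hSK, hSgen⟩ := hfg
  obtain ⟨n₀, -, γ, hγK, -, hsurj⟩ := hγ
  refine ⟨insert γ S, le_antisymm ?_ fun x hx => ?_⟩
  · rw [Submodule.span_le, Finset.coe_insert, Set.insert_subset_iff]
    exact ⟨hγK, fun g hg => (hSK g hg).1⟩
  refine mem_of_forall_decompose_mem 𝒜 fun n => ?_
  set xn := (decompose 𝒜 x n : R)
  rcases lt_or_ge n 0 with hn | hn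
  · obtain ⟨r, -, hr⟩ := hsurj n hn xn (SetLike.coe_mem _)
    exact hr ▸ Submodule.smul_mem _ r (Submodule.subset_span (by simp))
  · have hxn_nonneg : ∀ m : ℤ, m < 0 → (decompose 𝒜 xn m : R) = 0 := fun m hm =>
      decompose_of_mem_ne 𝒜 (SetLike.coe_mem _) (by omega)
    exact Submodule.span_mono (by simp)
      (AddSubgroup.closure_mul_le_span _ _ (hSgen xn (hgraded x hx n) hxn_nonneg))
end

section
/- Let C be a pretriangulated category with shift indexed by ℤ, and let k and M be objects of C. Suppose there are finitely many integers n_1, …, n_r and morphisms θ_j : k⟦n_j⟧ → M such that for every integer t, every morphism γ : k⟦t⟧ → M can be written as γ = Σ_{j=1}^r θ_j ∘ r_j for some morphisms r_j : k⟦t⟧ → k⟦n_j⟧. Then there exist an object F and a morphism Ψ : M → F such that: (a) Ψ is a ghost with respect to k; and (b) every ghost f : M → X with respect to k factors as f = h ∘ Ψ for some morphism h : F → X. Moreover, Ψ can be taken to be the second morphism in a distinguished triangle ⊕_{j=1}^r k⟦n_j⟧ → M → F → (⊕_j k⟦n_j⟧)⟦1⟧ whose first morphism has components θ_j. -/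
/-! Take `Ψ` to be the cone of `φ = biproduct.desc θ`. Every map `k⟦t⟧ ⟶ M` factors through `φ`
and `φ ≫ Ψ = 0`, so `Ψ` is a ghost. Conversely a ghost `f` kills each `θ j`, hence `φ`, and
`Hom(-, X)` is exact on the distinguished triangle, so `f` factors through `Ψ`. -/

open CategoryTheory CategoryTheory.Limits CategoryTheory.Pretriangulated

def IsGhost {C : Type*} [Category C] [Preadditive C] [HasShift C ℤ]
    (k : C) {M X : C} (f : M ⟶ X) : Prop :=
  ∀ (n : ℤ) (g : k⟦n⟧ ⟶ M), g ≫ f = 0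

section Ghost

variable {C : Type*} [Category C] [Preadditive C]

theorem IsGhost.of_factors_through [HasShift C ℤ] {k P M X : C} {φ : P ⟶ M} {Ψ : M ⟶ X}
    (hφ : ∀ (t : ℤ) (γ : k⟦t⟧ ⟶ M), ∃ u : k⟦t⟧ ⟶ P, γ = u ≫ φ) (hΨ : φ ≫ Ψ = 0) :
    IsGhost k Ψ := by
  intro t γ
  obtain ⟨u, rfl⟩ := hφ t γ
  rw [Category.assoc, hΨ, comp_zero]

theorem IsGhost.biproduct_desc_comp_eq_zero [HasShift C ℤ] {k M X : C} {J : Type*} {n : J → ℤ}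
    [HasBiproduct fun j => k⟦n j⟧] (θ : ∀ j, k⟦n j⟧ ⟶ M) {f : M ⟶ X} (hf : IsGhost k f) :
    biproduct.desc θ ≫ f = 0 := by
  ext j
  simpa using hf (n j) (θ j)

theorem exists_eq_comp_biproduct_desc_of_eq_sum {A M : C} {J : Type} [Fintype J] {P : J → C}
    [HasBiproduct P] (θ : ∀ j, P j ⟶ M) {γ : A ⟶ M} (ρ : ∀ j, A ⟶ P j)
    (hγ : γ = ∑ j, ρ j ≫ θ j) : ∃ u : A ⟶ ⨁ P, γ = u ≫ biproduct.desc θ :=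
  ⟨biproduct.lift ρ, by rw [biproduct.lift_desc, hγ]⟩

end Ghost

/-- If the maps `θ_j : k⟦n_j⟧ ⟶ M`, `j = 1, …, r`, generate all maps `k⟦t⟧ ⟶ M` in the
sense that every such map is a sum `Σ_j r_j ≫ θ_j`, then completing
`biproduct.desc θ : ⊕_j k⟦n_j⟧ ⟶ M` to a distinguished triangle yields a universal ghost
`Ψ : M ⟶ F` out of `M`: `Ψ` is a ghost with respect to `k`, and every ghost out of `M`
factors through `Ψ`. -/
theorem exists_universal_ghost
    {C : Type*} [Category C] [HasZeroObject C] [Preadditive C] [HasShift C ℤ]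
    [∀ n : ℤ, (shiftFunctor C n).Additive] [Pretriangulated C] [HasFiniteBiproducts C]
    (k M : C) (r : ℕ) (n : Fin r → ℤ) (θ : ∀ j : Fin r, k⟦n j⟧ ⟶ M)
    (hgen : ∀ (t : ℤ) (γ : k⟦t⟧ ⟶ M),
      ∃ ρ : ∀ j : Fin r, (k⟦t⟧ ⟶ k⟦n j⟧), γ = ∑ j : Fin r, ρ j ≫ θ j) :
    ∃ (F : C) (Ψ : M ⟶ F) (δ : F ⟶ (⨁ fun j : Fin r => k⟦n j⟧)⟦(1 : ℤ)⟧),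
      (Triangle.mk (biproduct.desc θ) Ψ δ ∈ distTriang C) ∧
      IsGhost k Ψ ∧
      ∀ (X : C) (f : M ⟶ X), IsGhost k f → ∃ h : F ⟶ X, f = Ψ ≫ h := by
  obtain ⟨F, Ψ, δ, hT⟩ := distinguished_cocone_triangle (biproduct.desc θ)
  have hfactor (t : ℤ) (γ : k⟦t⟧ ⟶ M) : ∃ u, γ = u ≫ biproduct.desc θ := by
    obtain ⟨ρ, hρ⟩ := hgen t γ
    exact exists_eq_comp_biproduct_desc_of_eq_sum θ ρ hρ
  refine ⟨F, Ψ, δ, hT, IsGhost.of_factors_through hfactor (comp_distTriang_mor_zero₁₂ _ hT), ?_⟩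
  intro X f hf
  exact Triangle.yoneda_exact₂ _ hT f (hf.biproduct_desc_comp_eq_zero θ)
end

section
/- Let C be a pretriangulated category with shift indexed by ℤ and let k be an object of C. Suppose P →θ M →ρ N → P⟦1⟧ is a distinguished triangle in C such that P is a finite biproduct ⊕_{j=1}^r k⟦n_j⟧ for some integers n_1, …, n_r, and such that ρ is a ghost with respect to k. Then for every integer t, every morphism γ : k⟦t⟧ → M can be written as γ = Σ_{j=1}^r θ_j ∘ r_j for some morphisms r_j : k⟦t⟧ → k⟦n_j⟧, where θ_j : k⟦n_j⟧ → M is the composite of the j-th biproduct inclusion with θ. -/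
open CategoryTheory CategoryTheory.Limits CategoryTheory.Pretriangulated

/-!
Since `ρ` is a ghost, `γ ≫ ρ = 0`, so by exactness of `Hom(k⟦t⟧, -)` on the distinguished
triangle `γ` factors as `g ≫ θ` through `P = ⊕_j k⟦n_j⟧`. Splitting `g` into its components
`r_j = g ≫ π_j` gives `γ = Σ_j r_j ≫ ι_j ≫ θ`.
-/

theorem CategoryTheory.Limits.biproduct.comp_eq_sum_π_comp_ι_comp {C : Type*} [Category C]
    [Preadditive C] {J : Type} [Fintype J] (f : J → C) [HasBiproduct f] {X Y : C}
    (g : X ⟶ ⨁ f) (θ : ⨁ f ⟶ Y) :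
    g ≫ θ = ∑ j, (g ≫ biproduct.π f j) ≫ (biproduct.ι f j ≫ θ) := by
  conv_lhs => rw [← Category.id_comp θ, ← biproduct.total, Preadditive.sum_comp,
    Preadditive.comp_sum]
  simp only [Category.assoc]

theorem IsGhost.exists_eq_comp_mor₁ {C : Type*} [Category C] [HasZeroObject C] [Preadditive C]
    [HasShift C ℤ] [∀ n : ℤ, (shiftFunctor C n).Additive] [Pretriangulated C]
    {k : C} {T : Triangle C} (hT : T ∈ distTriang C) (hghost : IsGhost k T.mor₂)
    (t : ℤ) (γ : k⟦t⟧ ⟶ T.obj₂) : ∃ g : k⟦t⟧ ⟶ T.obj₁, γ = g ≫ T.mor₁ :=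
  Triangle.coyoneda_exact₂ T hT γ (hghost t γ)

/-- Suppose `P ⟶ M ⟶ N ⟶ P⟦1⟧` is a distinguished triangle in which `P = ⊕_j k⟦n_j⟧` is a
finite biproduct of shifts of `k` and the second map `ρ` is a ghost with respect to `k`.
Then the components `θ_j = ι_j ≫ θ` of the first map generate all maps from shifts of `k`
to `M`: every `γ : k⟦t⟧ ⟶ M` can be written as `Σ_j r_j ≫ θ_j`. -/
theorem generators_of_ghost_triangle
    {C : Type*} [Category C] [HasZeroObject C] [Preadditive C] [HasShift C ℤ]
    [∀ n : ℤ, (shiftFunctor C n).Additive] [Pretriangulated C] [HasFiniteBiproducts C]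
    (k M N : C) (r : ℕ) (n : Fin r → ℤ)
    (θ : (⨁ fun j : Fin r => k⟦n j⟧) ⟶ M) (ρ : M ⟶ N)
    (δ : N ⟶ (⨁ fun j : Fin r => k⟦n j⟧)⟦(1 : ℤ)⟧)
    (hdist : Triangle.mk θ ρ δ ∈ distTriang C)
    (hghost : IsGhost k ρ) :
    ∀ (t : ℤ) (γ : k⟦t⟧ ⟶ M),
      ∃ ρ' : ∀ j : Fin r, (k⟦t⟧ ⟶ k⟦n j⟧),
        γ = ∑ j : Fin r, ρ' j ≫ (biproduct.ι (fun j : Fin r => k⟦n j⟧) j ≫ θ) := by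
  intro t γ
  obtain ⟨g, rfl⟩ := IsGhost.exists_eq_comp_mor₁ hdist hghost t γ
  exact ⟨fun j => g ≫ biproduct.π _ j, biproduct.comp_eq_sum_π_comp_ι_comp _ g θ⟩
end

section
/- Let p be an odd prime and k a field of characteristic p. Let G be the elementary abelian group (ℤ/pℤ) × (ℤ/pℤ), written multiplicatively with generators x and y, let kG be its group algebra, and let M = kG/I where I is the ideal of kG generated by (y−1)² and (x−1)(y−1). Then the image of y−1 in M is nonzero, it spans a one-dimensional kG-submodule of M on which G acts trivially (so this submodule is isomorphic to the trivial module k), and this submodule is not a direct summand of M as a kG-module; equivalently, the short exact sequence 0 → k → M → M/k·(y−1) → 0 of kG-modules is non-split. -/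
/-- The elementary abelian group `G = (ℤ/pℤ) × (ℤ/pℤ)`, written multiplicatively. -/
abbrev ElemAbelian (p : ℕ) : Type := Multiplicative (ZMod p × ZMod p)

/-- The generator `x` of `G`, viewed in the group algebra `kG`. -/
noncomputable def xGen (p : ℕ) (k : Type*) [Field k] : MonoidAlgebra k (ElemAbelian p) :=
  MonoidAlgebra.of k (ElemAbelian p) (Multiplicative.ofAdd ((1 : ZMod p), (0 : ZMod p)))

/-- The generator `y` of `G`, viewed in the group algebra `kG`. -/
noncomputable def yGen (p : ℕ) (k : Type*) [Field k] : MonoidAlgebra k (ElemAbelian p) :=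
  MonoidAlgebra.of k (ElemAbelian p) (Multiplicative.ofAdd ((0 : ZMod p), (1 : ZMod p)))

/-- The ideal `I = ((y-1)², (x-1)(y-1))` of `kG`. -/
noncomputable def genIdeal (p : ℕ) (k : Type*) [Field k] :
    Ideal (MonoidAlgebra k (ElemAbelian p)) :=
  Ideal.span {(yGen p k - 1) ^ 2, (xGen p k - 1) * (yGen p k - 1)}

/-- The `kG`-module `M = kG/I`. -/
abbrev genModule (p : ℕ) (k : Type*) [Field k] : Type _ :=
  MonoidAlgebra k (ElemAbelian p) ⧸ genIdeal p k

/-- The image `e` of `y - 1` in `M = kG/I`. -/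
noncomputable def eElt (p : ℕ) (k : Type*) [Field k] : genModule p k :=
  Ideal.Quotient.mk (genIdeal p k) (yGen p k - 1)

/-!
The algebra map `kG → k[ε]`, `x ↦ 1`, `y ↦ 1 + ε` (well defined because `(1 + ε) ^ p = 1` in
characteristic `p`) kills `(y - 1)²` and `(x - 1)(y - 1)` but not `y - 1`, so `e ≠ 0`.
As `(x - 1) e = (y - 1) e = 0` and `x, y` generate `G`, the group fixes `e`, hence `kG e = k e`.
Finally `y - 1` kills `k e` but sends `1 ∈ M` to `e`: writing `1 = s + n` along a complement `N`
gives `e = (y - 1) n ∈ N`.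
-/

open DualNumber

section FixedVectors

variable {k G M : Type*} [CommSemiring k] [AddCommMonoid M]

theorem MonoidAlgebra.of_smul_eq_self_of_closure_eq_top [Group G]
    [Module (MonoidAlgebra k G) M] {S : Set G} (hS : Subgroup.closure S = ⊤) {m : M}
    (h : ∀ g ∈ S, of k G g • m = m) (g : G) : of k G g • m = m := by
  induction (hS ▸ Subgroup.mem_top g : g ∈ Subgroup.closure S)
    using Subgroup.closure_induction with
  | mem g hg => exact h g hg
  | one => rw [map_one, one_smul]
  | mul g g' _ _ hg hg' => rw [map_mul, mul_smul, hg', hg]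
  | inv g _ hg => rw [← hg, ← mul_smul, ← map_mul, inv_mul_cancel, map_one, one_smul, hg]

theorem MonoidAlgebra.restrictScalars_span_singleton_of_forall_of_smul [Monoid G] [Module k M]
    [Module (MonoidAlgebra k G) M] [IsScalarTower k (MonoidAlgebra k G) M] {m : M}
    (h : ∀ g, of k G g • m = m) :
    (Submodule.span (MonoidAlgebra k G) {m}).restrictScalars k = Submodule.span k {m} := by
  refine le_antisymm ?_ (Submodule.span_le_restrictScalars k _ _)
  intro z hz
  obtain ⟨r, rfl⟩ := Submodule.mem_span_singleton.mp hz
  clear hz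
  induction r using MonoidAlgebra.induction_on with
  | of g => rw [h g]; exact Submodule.mem_span_singleton_self m
  | add r r' hr hr' => rw [add_smul]; exact Submodule.add_mem _ hr hr'
  | smul c r hr => rw [smul_assoc]; exact Submodule.smul_mem _ c hr

end FixedVectors

theorem Submodule.not_isCompl_span_singleton {R M : Type*} [CommSemiring R] [AddCommMonoid M]
    [Module R M] {a : R} {m m₀ : M} (hm : m ≠ 0) (ham : a • m = 0) (hm₀ : a • m₀ = m)
    (N : Submodule R M) : ¬ IsCompl (span R {m}) N := by
  intro hN
  obtain ⟨s, hs, n, hn, rfl⟩ :=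
    mem_sup.mp (hN.sup_eq_top ▸ mem_top : m₀ ∈ span R {m} ⊔ N)
  have has : a • s = 0 := by
    obtain ⟨r, rfl⟩ := mem_span_singleton.mp hs
    rw [smul_comm, ham, smul_zero]
  have hmN : m ∈ N := by
    rw [← hm₀, smul_add, has, zero_add]
    exact N.smul_mem a hn
  exact hm (disjoint_def.mp hN.disjoint m (mem_span_singleton_self m) hmN)

theorem ZMod.closure_ofAdd_basis_eq_top (n : ℕ) :
    Subgroup.closure {Multiplicative.ofAdd ((1 : ZMod n), (0 : ZMod n)),
      Multiplicative.ofAdd ((0 : ZMod n), (1 : ZMod n))} = ⊤ := by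
  refine eq_top_iff.mpr fun g _ => ?_
  have hg : g = Multiplicative.ofAdd ((1 : ZMod n), (0 : ZMod n)) ^ ((g.toAdd.1.cast : ℤ)) *
      Multiplicative.ofAdd ((0 : ZMod n), (1 : ZMod n)) ^ ((g.toAdd.2.cast : ℤ)) := by
    apply Multiplicative.toAdd.injective
    simp
  rw [hg]
  exact Subgroup.mul_mem _ (Subgroup.zpow_mem _ (Subgroup.subset_closure (by simp)) _)
    (Subgroup.zpow_mem _ (Subgroup.subset_closure (by simp)) _)

def DualNumber.oneAddEpsHom (R : Type*) [CommSemiring R] : Multiplicative R →* R[ε] where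
  toFun a := 1 + a.toAdd • ε
  map_one' := by simp
  map_mul' a b := by
    simp only [toAdd_mul, add_smul, mul_add, add_mul, one_mul, mul_one, smul_mul_smul_comm,
      eps_mul_eps, smul_zero]
    abel

noncomputable def toDualNumber (p : ℕ) (k : Type*) [Field k] [CharP k p] :
    MonoidAlgebra k (ElemAbelian p) →ₐ[k] k[ε] :=
  MonoidAlgebra.lift k k[ε] (ElemAbelian p) <| (DualNumber.oneAddEpsHom k).comp <|
    AddMonoidHom.toMultiplicative <|
      (ZMod.castHom dvd_rfl k).toAddMonoidHom.comp (AddMonoidHom.snd (ZMod p) (ZMod p))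

section GenModule

variable (p : ℕ) (k : Type*) [Field k]

theorem toDualNumber_xGen [CharP k p] : toDualNumber p k (xGen p k) = 1 := by
  simp [toDualNumber, xGen, DualNumber.oneAddEpsHom]

theorem toDualNumber_yGen [CharP k p] : toDualNumber p k (yGen p k) = 1 + ε := by
  simp [toDualNumber, yGen, DualNumber.oneAddEpsHom]

theorem genIdeal_le_ker_toDualNumber [CharP k p] :
    genIdeal p k ≤ RingHom.ker (toDualNumber p k) := by
  rw [genIdeal, Ideal.span_le]
  rintro z (rfl | rfl) <;>
    simp [RingHom.mem_ker, toDualNumber_xGen, toDualNumber_yGen, sq, eps_mul_eps]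

theorem eElt_ne_zero [CharP k p] : eElt p k ≠ 0 := by
  rw [eElt, Ne, Ideal.Quotient.eq_zero_iff_mem]
  intro h
  have := genIdeal_le_ker_toDualNumber p k h
  rw [RingHom.mem_ker, map_sub, toDualNumber_yGen, map_one, add_sub_cancel_left] at this
  exact one_ne_zero (congrArg TrivSqZeroExt.snd this)

theorem smul_mk_genIdeal (r a : MonoidAlgebra k (ElemAbelian p)) :
    r • (Ideal.Quotient.mk (genIdeal p k) a : genModule p k) =
      Ideal.Quotient.mk (genIdeal p k) (r * a) :=
  (Submodule.Quotient.mk_smul _ r a).symm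

theorem xGen_sub_one_smul_eElt : (xGen p k - 1) • eElt p k = 0 := by
  rw [eElt, smul_mk_genIdeal, Ideal.Quotient.eq_zero_iff_mem]
  exact Ideal.subset_span (Set.mem_insert_of_mem _ rfl)

theorem yGen_sub_one_smul_eElt : (yGen p k - 1) • eElt p k = 0 := by
  rw [eElt, smul_mk_genIdeal, ← sq, Ideal.Quotient.eq_zero_iff_mem]
  exact Ideal.subset_span (Set.mem_insert _ _)

theorem yGen_sub_one_smul_mk_one :
    (yGen p k - 1) • Ideal.Quotient.mk (genIdeal p k) 1 = eElt p k := by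
  rw [smul_mk_genIdeal, mul_one, eElt]

theorem of_smul_eElt (g : ElemAbelian p) :
    MonoidAlgebra.of k (ElemAbelian p) g • eElt p k = eElt p k := by
  refine MonoidAlgebra.of_smul_eq_self_of_closure_eq_top (ZMod.closure_ofAdd_basis_eq_top p)
    ?_ g
  rintro g (rfl | rfl)
  · have := xGen_sub_one_smul_eElt p k
    rwa [sub_smul, one_smul, sub_eq_zero] at this
  · have := yGen_sub_one_smul_eElt p k
    rwa [sub_smul, one_smul, sub_eq_zero] at this

end GenModule

theorem genModule_trivial_line_not_summand_general
    (p : ℕ) (k : Type*) [Field k] [CharP k p] :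
    eElt p k ≠ 0 ∧
    (∀ g : ElemAbelian p, (MonoidAlgebra.of k (ElemAbelian p) g) • eElt p k = eElt p k) ∧
    Module.finrank k
      ((Submodule.span (MonoidAlgebra k (ElemAbelian p)) {eElt p k}).restrictScalars k) = 1 ∧
    ¬ ∃ N : Submodule (MonoidAlgebra k (ElemAbelian p)) (genModule p k),
        IsCompl (Submodule.span (MonoidAlgebra k (ElemAbelian p)) {eElt p k}) N := by
  have he := eElt_ne_zero p k
  refine ⟨he, of_smul_eElt p k, ?_, ?_⟩
  · rw [MonoidAlgebra.restrictScalars_span_singleton_of_forall_of_smul (of_smul_eElt p k)]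
    exact finrank_span_singleton he
  · rintro ⟨N, hN⟩
    exact Submodule.not_isCompl_span_singleton he (yGen_sub_one_smul_eElt p k)
      (yGen_sub_one_smul_mk_one p k) N hN

/-- Let `p` be an odd prime, `k` a field of characteristic `p`, and
`G = (ℤ/pℤ) × (ℤ/pℤ)` with generators `x, y`.  Let `M = kG/I` where
`I = ((y-1)², (x-1)(y-1))` and let `e` be the image of `y - 1` in `M`.  Then `e ≠ 0`,
the `kG`-submodule of `M` generated by `e` is one-dimensional over `k` with trivial
`G`-action (hence isomorphic to the trivial module `k`), and this submodule is not a
direct summand of `M` as a `kG`-module (equivalently, the extension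
`0 → k → M → M/k·e → 0` is non-split). -/
theorem genModule_trivial_line_not_summand
    (p : ℕ) [Fact p.Prime] (hp : p ≠ 2) (k : Type*) [Field k] [CharP k p] :
    eElt p k ≠ 0 ∧
    (∀ g : ElemAbelian p, (MonoidAlgebra.of k (ElemAbelian p) g) • eElt p k = eElt p k) ∧
    Module.finrank k
      ((Submodule.span (MonoidAlgebra k (ElemAbelian p)) {eElt p k}).restrictScalars k) = 1 ∧
    ¬ ∃ N : Submodule (MonoidAlgebra k (ElemAbelian p)) (genModule p k),
        IsCompl (Submodule.span (MonoidAlgebra k (ElemAbelian p)) {eElt p k}) N :=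
  genModule_trivial_line_not_summand_general p k
end
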